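/- arXiv:2511.13624 — 4 statements merged into one kernel-verified Lean document; each statement's English description precedes it below -/
import Mathlib

section
/- If a closed testing procedure's suite of local tests satisfies consonance, monotonicity, and symmetry, then the individual rejection decisions coincide with the step-down procedure: for the sorted p-value vector p_1 ≤ ... ≤ p_K, D_1(p) = φ_K(p) and D_k(p) = D_{k-1}(p) · φ_{K-k+1}(p_k, p_{k+1}, ..., p_K) for k = 2, ..., K. -/
lemma fin_sm_le {c K : ℕ} (f : Fin c → Fin K) (hf : StrictMono f) (i : Fin c) :
    (f i : ℕ) ≤ K - c + i := by
  have key : ∀ d (a : Fin c) (h : (a:ℕ) + d < c), (f a : ℕ) + d ≤ f ⟨a + d, h⟩ := by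
    intro d
    induction d with
    | zero => intro a h; simp
    | succ n ih =>
      intro a h
      have h1 : (a:ℕ) + n < c := by omega
      have h2 := ih a h1
      have h3 : (⟨(a:ℕ) + n, h1⟩ : Fin c) < ⟨(a:ℕ) + (n+1), h⟩ := by
        simp [Fin.lt_def]
      have := hf h3
      rw [Fin.lt_def] at this
      omega
  have hic : (i:ℕ) < c := i.2
  have h4 : (i:ℕ) + (c - 1 - i) < c := by omega
  have h5 := key (c - 1 - i) i h4
  have h6 : (f ⟨(i:ℕ) + (c-1-i), h4⟩ : ℕ) < K := (f _).2
  omega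

lemma lemA {K : ℕ} (φ : Finset (Fin K) → (Fin K → ℝ) → Bool)
    (hsymm : ∀ (I J : Finset (Fin K)) (p q : Fin K → ℝ),
      Multiset.map p I.val = Multiset.map q J.val → φ I p = φ J q)
    (hmono : ∀ (I : Finset (Fin K)) (p q : Fin K → ℝ),
      (∀ i, p i ≤ q i) → φ I q ≤ φ I p)
    (p : Fin K → ℝ) (hp : Monotone p)
    (J : Finset (Fin K)) (l : Fin K) (hcard : J.card = K - (l:ℕ))
    (h : φ (Finset.Ici l) p = true) : φ J p = true := by
  have hlK : (l:ℕ) < K := l.2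
  -- order embedding of J
  set e : Fin J.card ↪o Fin K := J.orderEmbOfFin rfl with he
  have hbound : ∀ m : Fin J.card, ((l:ℕ) + (m:ℕ)) < K := by
    intro m; have := m.2; omega
  -- define g
  set g : Fin K → Fin K := fun j =>
    if hj : j ∈ J then ⟨(l:ℕ) + ((J.orderIsoOfFin rfl).symm ⟨j, hj⟩ : Fin J.card),
      hbound _⟩ else j with hg
  have hgval : ∀ (j : Fin K) (hj : j ∈ J),
      g j = ⟨(l:ℕ) + ((J.orderIsoOfFin rfl).symm ⟨j, hj⟩ : Fin J.card), hbound _⟩ := by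
    intro j hj; simp [hg, hj]
  have hle : ∀ j, j ≤ g j := by
    intro j
    by_cases hj : j ∈ J
    · rw [hgval j hj]
      set m := (J.orderIsoOfFin rfl).symm ⟨j, hj⟩
      have hej : e m = j := by
        have : (J.orderIsoOfFin rfl) m = ⟨j, hj⟩ := (J.orderIsoOfFin rfl).apply_symm_apply _
        have h' : ((J.orderIsoOfFin rfl) m : Fin K) = j := congrArg Subtype.val this
        rw [Finset.coe_orderIsoOfFin_apply] at h'
        exact h'
      have := fin_sm_le e e.strictMono m
      rw [hej] at this
      rw [Fin.le_def]
      simp only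
      omega
    · simp [hg, hj]
  have hinj : Set.InjOn g J := by
    intro a ha b hb hab
    rw [hgval a ha, hgval b hb] at hab
    have : ((J.orderIsoOfFin rfl).symm ⟨a, ha⟩ : Fin J.card)
        = (J.orderIsoOfFin rfl).symm ⟨b, hb⟩ := by
      have := congrArg Fin.val hab
      simp only at this
      exact Fin.val_injective (by omega)
    have := congrArg (J.orderIsoOfFin rfl) this
    simp only [OrderIso.apply_symm_apply] at this
    exact congrArg Subtype.val this
  have himg : J.image g = Finset.Ici l := by
    apply Finset.eq_of_subset_of_card_le
    · intro x hx
      rw [Finset.mem_image] at hx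
      obtain ⟨j, hj, rfl⟩ := hx
      rw [hgval j hj, Finset.mem_Ici, Fin.le_def]
      simp
    · rw [Finset.card_image_of_injOn hinj, hcard, Fin.card_Ici]
  have hmult : Multiset.map (p ∘ g) J.val = Multiset.map p (Finset.Ici l).val := by
    rw [← Multiset.map_map, ← Finset.image_val_of_injOn hinj, himg]
  have h1 : φ J (p ∘ g) = φ (Finset.Ici l) p := hsymm _ _ _ _ hmult
  have h2 : φ J (p ∘ g) ≤ φ J p := hmono J p (p ∘ g) (fun i => hp (hle i))
  rw [h1, h] at h2
  exact Bool.eq_true_of_true_le h2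

/-- For a closed testing suite that is consonant, monotone and symmetric,
the individual closed-testing decisions coincide with the step-down procedure on the
sorted p-value vector: `D_k = ∏_{l ≤ k} φ(Ici l)`. Local tests are encoded as
`φ : Finset (Fin K) → (Fin K → ℝ) → Bool`, with symmetry/true-locality/size-dependence
expressed via invariance under equality of the multisets of p-values. -/
theorem stmt0 (K : ℕ) (φ : Finset (Fin K) → (Fin K → ℝ) → Bool)
    (hsymm : ∀ (I J : Finset (Fin K)) (p q : Fin K → ℝ),
      Multiset.map p I.val = Multiset.map q J.val → φ I p = φ J q)
    (hmono : ∀ (I : Finset (Fin K)) (p q : Fin K → ℝ),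
      (∀ i, p i ≤ q i) → φ I q ≤ φ I p)
    (hcons : ∀ (I : Finset (Fin K)) (p : Fin K → ℝ), I.Nonempty →
      (∀ J, I ⊆ J → φ J p = true) →
      ∃ i ∈ I, ∀ J, i ∈ J → φ J p = true)
    (p : Fin K → ℝ) (hp : Monotone p) (k : Fin K) :
    ((∀ J : Finset (Fin K), k ∈ J → φ J p = true) ↔
      ∀ l ≤ k, φ (Finset.Ici l) p = true) := by
  constructor
  · intro hD l hl
    exact hD _ (Finset.mem_Ici.mpr hl)
  · intro h
    -- Step 1 : every superset of Ici k is rejected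
    have step1 : ∀ J, Finset.Ici k ⊆ J → φ J p = true := by
      intro J hJ
      have hcK : J.card ≤ K := by
        simpa using Finset.card_le_univ J
      have hc1 : K - (k:ℕ) ≤ J.card := by
        have := Finset.card_le_card hJ
        rwa [Fin.card_Ici] at this
      have hkK : (k:ℕ) < K := k.2
      have hlK : K - J.card < K := by omega
      refine lemA φ hsymm hmono p hp J ⟨K - J.card, hlK⟩ (by simp; omega) ?_
      refine h _ ?_
      rw [Fin.le_def]
      simp only
      omega
    -- Step 2 : consonance yields some i ≥ k with full rejection
    obtain ⟨i, hik, Di⟩ := hcons (Finset.Ici k) p ⟨k, Finset.mem_Ici.mpr le_rfl⟩ step1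
    rw [Finset.mem_Ici] at hik
    -- Step 3 : transfer from i to k
    intro J hkJ
    by_cases hiJ : i ∈ J
    · exact Di J hiJ
    · set q : Fin K → ℝ := Function.update p k (p i) with hq
      have hmult : Multiset.map q J.val = Multiset.map p (insert i (J.erase k)).val := by
        have h1 : J.val = k ::ₘ (J.erase k).val := by
          rw [Finset.erase_val]
          exact (Multiset.cons_erase (by simpa using hkJ)).symm
        have h2 : (insert i (J.erase k)).val = i ::ₘ (J.erase k).val :=
          Finset.insert_val_of_notMem (fun hmem => hiJ (Finset.mem_of_mem_erase hmem))
        rw [h1, h2, Multiset.map_cons, Multiset.map_cons]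
        congr 1
        · simp [hq]
        · apply Multiset.map_congr rfl
          intro x hx
          have hxk : x ≠ k := by
            have : x ∈ J.erase k := hx
            exact Finset.ne_of_mem_erase this
          simp [hq, Function.update_of_ne hxk]
      have h1 : φ J q = φ (insert i (J.erase k)) p := hsymm _ _ _ _ hmult
      have h2 : φ J q ≤ φ J p := by
        apply hmono
        intro j
        by_cases hj : j = k
        · subst hj; simp [hq]; exact hp hik
        · simp [hq, Function.update_of_ne hj]
      rw [h1, Di _ (Finset.mem_insert_self _ _)] at h2
      exact Bool.eq_true_of_true_le h2
end

section
/- Let D : [0,1]^K → {0,1}^K be a monotone testing policy. For each subset I ⊆ [K], define the local test φ_I(p) = max_{k ∈ I} D_k(p_I^0), where p_I^0 is the vector p with all coordinates outside I set to 0. Then the closed-testing individual rejections derived from these local tests dominate D: for every p ∈ [0,1]^K and every k ∈ [K], ∏_{I ∋ k} φ_I(p) ≥ D_k(p). -/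
/-- For a monotone testing policy `D`, the closed-testing individual
rejections derived from the local tests `φ_I(p) = max_{k ∈ I} D_k(p_I^0)` dominate `D`:
if `D_k(p) = 1` then every local test `φ_I` with `k ∈ I` provisionally rejects, i.e.
`∏_{I ∋ k} φ_I(p) ≥ D_k(p)`. -/
theorem stmt1 (K : ℕ) (D : (Fin K → ℝ) → Fin K → Bool)
    (hmono : ∀ p q : Fin K → ℝ, (∀ i, p i ≤ q i) → ∀ k, D q k ≤ D p k)
    (p : Fin K → ℝ) (hp : ∀ i, 0 ≤ p i) (k : Fin K)
    (hk : D p k = true) :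
    ∀ I : Finset (Fin K), k ∈ I →
      ∃ j ∈ I, D (fun i => if i ∈ I then p i else 0) j = true := by
  intro I hkI
  refine ⟨k, hkI, ?_⟩
  have hle : ∀ i, (if i ∈ I then p i else 0) ≤ p i := by
    intro i; split <;> simp [hp i]
  have := hmono (fun i => if i ∈ I then p i else 0) p hle k
  rw [hk] at this
  exact Bool.eq_true_of_true_le this
end

section
/- For any coordinatewise non-increasing testing policy D : [0,1]^K → {0,1}^K that is coordinatewise right-continuous at zero, D strongly controls FWER at level α (for all parameter configurations satisfying the extreme-alternative assumption) if and only if for every nonempty I ⊆ [K], ∫_{[0,1]^{|I|}} max_{k ∈ I} D_k(p_I^0) dp_I ≤ α, where p_I^0 is the vector that equals p on coordinates in I and 0 elsewhere. -/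
/-!
Since `D` is non-increasing, the set `R_I` of p-value vectors at which some hypothesis of `I` is
rejected is a lower set, so with true nulls `I` and `p ≥ 0` a false rejection forces `p_I^0 ∈ R_I`;
the probability of the latter involves only the uniform coordinates in `I` and is the integral.
Conversely, extreme alternatives given by point masses at `c > 0` show that the uniform measure of
`{p | p_I^c ∈ R_I}` is at most `α`. As `c ↓ 0` these sets increase to `{p | p_I^0 ∈ R_I}`: because
`D` is `{0, 1}`-valued and right-continuous at `0` in each coordinate, all zero coordinates of a
point of `R_I` can be raised one after another to a common `ε > 0` without leaving `R_I`.
-/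

open MeasureTheory Filter Topology

section LowerSet

variable {ι : Type*} [DecidableEq ι] {R : Set (ι → ℝ)}

theorem IsLowerSet.exists_pos_piecewise_mem (hR : IsLowerSet R)
    (hR₀ : ∀ p ∈ R, ∀ i, p i = 0 → ∃ ε > 0, Function.update p i ε ∈ R)
    (S : Finset ι) {q : ι → ℝ} (hq : q ∈ R) (hqS : ∀ j ∈ S, q j = 0) :
    ∃ ε > 0, S.piecewise (fun _ => ε) q ∈ R := by
  induction S using Finset.induction_on generalizing q with
  | empty => exact ⟨1, one_pos, by simpa using hq⟩
  | @insert i S hiS ih =>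
    obtain ⟨εi, hεi, hqi⟩ := hR₀ q hq i (hqS i (Finset.mem_insert_self i S))
    obtain ⟨εS, hεS, hqS'⟩ := ih hqi fun j hj => by
      rw [Function.update_of_ne (ne_of_mem_of_not_mem hj hiS)]
      exact hqS j (Finset.mem_insert_of_mem hj)
    refine ⟨min εi εS, lt_min hεi hεS, hR (fun j => ?_) hqS'⟩
    by_cases hjS : j ∈ S
    · simp [hjS]
    · by_cases hji : j = i
      · subst hji; simp [hjS]
      · simp [hjS, hji]

variable [Fintype ι]

theorem IsLowerSet.preimage_piecewise_zero_eq_iUnion (hR : IsLowerSet R)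
    (hR₀ : ∀ p ∈ R, ∀ i, p i = 0 → ∃ ε > 0, Function.update p i ε ∈ R)
    (I : Finset ι) :
    (fun p => I.piecewise p fun _ => 0) ⁻¹' R
      = ⋃ n : ℕ, (fun p => I.piecewise p fun _ => 1 / (n + 1 : ℝ)) ⁻¹' R := by
  ext p
  simp only [Set.mem_preimage, Set.mem_iUnion]
  constructor
  · intro hp
    obtain ⟨ε, hε, hpε⟩ := hR.exists_pos_piecewise_mem hR₀ Iᶜ hp fun j hj => by
      simp [Finset.mem_compl.mp hj]
    obtain ⟨n, hn⟩ := exists_nat_one_div_lt hε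
    refine ⟨n, hR (fun j => ?_) hpε⟩
    by_cases hj : j ∈ I
    · simp [hj]
    · simpa [hj] using hn.le
  · rintro ⟨n, hn⟩
    exact hR (I.piecewise_le_piecewise le_rfl fun _ => by positivity) hn

theorem IsLowerSet.measure_preimage_piecewise_zero_le (hR : IsLowerSet R)
    (hR₀ : ∀ p ∈ R, ∀ i, p i = 0 → ∃ ε > 0, Function.update p i ε ∈ R)
    (I : Finset ι) (μ : Measure (ι → ℝ)) {b : ENNReal}
    (hb : ∀ n : ℕ, μ ((fun p => I.piecewise p fun _ => 1 / (n + 1 : ℝ)) ⁻¹' R) ≤ b) :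
    μ ((fun p => I.piecewise p fun _ => 0) ⁻¹' R) ≤ b := by
  have hmono :
      Monotone fun n : ℕ => (fun p => I.piecewise p fun _ => 1 / (n + 1 : ℝ)) ⁻¹' R :=
    fun m n hmn p hp =>
      hR (I.piecewise_le_piecewise le_rfl fun _ => Nat.one_div_le_one_div hmn) hp
  rw [hR.preimage_piecewise_zero_eq_iUnion hR₀, hmono.measure_iUnion]
  exact iSup_le hb

end LowerSet

theorem integral_finset_sup'_eq_measureReal {ι Ω : Type*} [MeasurableSpace Ω]
    (μ : Measure Ω) {I : Finset ι} (hI : I.Nonempty) {f : ι → Ω → ℝ}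
    (hf01 : ∀ k x, f k x = 0 ∨ f k x = 1)
    (hf : ∀ k, Measurable (f k)) :
    ∫ x, I.sup' hI (fun k => f k x) ∂μ = μ.real {x | ∃ k ∈ I, f k x = 1} := by
  set s := {x | ∃ k ∈ I, f k x = 1}
  have hs : MeasurableSet s := by
    have : s = ⋃ k ∈ I, f k ⁻¹' {1} := by ext; simp [s]
    exact this ▸ .biUnion I.countable_toSet fun k _ => hf k (measurableSet_singleton 1)
  rw [← integral_indicator_one hs]
  congr 1 with x
  by_cases hx : x ∈ s
  · rw [Set.indicator_of_mem hx, Pi.one_apply]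
    obtain ⟨k, hk, hk1⟩ := hx
    refine le_antisymm (Finset.sup'_le hI _ fun j _ => ?_)
      (hk1 ▸ Finset.le_sup' (fun k => f k x) hk)
    rcases hf01 j x with h | h <;> simp [h]
  · rw [Set.indicator_of_notMem hx]
    have h0 : ∀ j ∈ I, f j x = 0 := fun j hj =>
      (hf01 j x).resolve_right fun h => hx ⟨j, hj, h⟩
    rw [Finset.sup'_congr hI rfl h0, Finset.sup'_const]

section Measure

variable {ι α : Type*} [Fintype ι] [DecidableEq ι] [MeasurableSpace α]

theorem measurePreserving_piecewise_const (ν : ι → Measure α)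
    [∀ i, IsProbabilityMeasure (ν i)] (I : Finset ι) (c : α) :
    MeasurePreserving (fun p => I.piecewise p fun _ => c) (Measure.pi ν)
      (Measure.pi (I.piecewise ν fun _ => Measure.dirac c)) := by
  have : ∀ i, IsProbabilityMeasure (I.piecewise ν (fun _ => Measure.dirac c) i) := fun i => by
    by_cases hi : i ∈ I <;> simp only [hi, Finset.piecewise_eq_of_mem,
      Finset.piecewise_eq_of_notMem, not_false_eq_true] <;> infer_instance
  have hf : ∀ i, MeasurePreserving (I.piecewise (fun _ => id) (fun _ _ => c) i) (ν i)
      (I.piecewise ν (fun _ => Measure.dirac c) i) := fun i => by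
    by_cases hi : i ∈ I
    · simpa [hi] using MeasurePreserving.id (ν i)
    · simp only [hi, Finset.piecewise_eq_of_notMem, not_false_eq_true]
      exact ⟨measurable_const, by rw [Measure.map_const, measure_univ, one_smul]⟩
  convert measurePreserving_pi ν _ hf using 1
  ext p i
  by_cases hi : i ∈ I <;> simp [hi]

theorem pi_preimage_piecewise_const_congr {ν ν' : ι → Measure α}
    [∀ i, IsProbabilityMeasure (ν i)] [∀ i, IsProbabilityMeasure (ν' i)] {I : Finset ι}
    (h : ∀ i ∈ I, ν i = ν' i) (c : α)
    {s : Set (ι → α)} (hs : MeasurableSet s) :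
    Measure.pi ν ((fun p => I.piecewise p fun _ => c) ⁻¹' s)
      = Measure.pi ν' ((fun p => I.piecewise p fun _ => c) ⁻¹' s) := by
  rw [(measurePreserving_piecewise_const ν I c).measure_preimage hs.nullMeasurableSet,
    (measurePreserving_piecewise_const ν' I c).measure_preimage hs.nullMeasurableSet,
    I.piecewise_congr h fun _ _ => rfl]

end Measure

instance isProbabilityMeasure_restrict_Icc_zero_one :
    IsProbabilityMeasure (volume.restrict (Set.Icc (0 : ℝ) 1)) :=
  ⟨by rw [Measure.restrict_apply_univ, Real.volume_Icc, sub_zero, ENNReal.ofReal_one]⟩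

section Policy

variable {ι : Type*} {D : (ι → ℝ) → ι → ℝ}

def rejectionSet (D : (ι → ℝ) → ι → ℝ) (I : Finset ι) : Set (ι → ℝ) :=
  {p | ∃ k ∈ I, D p k = 1}

/-- `h k = false` marks a true null hypothesis. -/
def StronglyControlsFWER [Fintype ι] (D : (ι → ℝ) → ι → ℝ) (α : ℝ) : Prop :=
  ∀ (h : ι → Bool) (ν : ι → Measure ℝ),
    (∀ k, IsProbabilityMeasure (ν k)) →
    (∀ k, ν k (Set.Icc (0:ℝ) 1)ᶜ = 0) →
    (∀ k, h k = false → ν k = volume.restrict (Set.Icc 0 1)) →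
    Measure.pi ν {p | ∃ k, h k = false ∧ D p k = 1} ≤ ENNReal.ofReal α

theorem measurableSet_rejectionSet (hDmeas : ∀ k, Measurable fun p => D p k) (I : Finset ι) :
    MeasurableSet (rejectionSet D I) := by
  have : rejectionSet D I = ⋃ k ∈ I, (fun p => D p k) ⁻¹' {1} := by
    ext; simp [rejectionSet]
  exact this ▸ .biUnion I.countable_toSet fun k _ => hDmeas k (measurableSet_singleton 1)

theorem isLowerSet_rejectionSet (hD01 : ∀ p k, D p k = 0 ∨ D p k = 1)
    (hmono : ∀ p q : ι → ℝ, (∀ i, p i ≤ q i) → ∀ k, D q k ≤ D p k) (I : Finset ι) :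
    IsLowerSet (rejectionSet D I) := by
  rintro q p hpq ⟨k, hk, hqk⟩
  refine ⟨k, hk, (hD01 p k).resolve_left fun hpk => ?_⟩
  have := hmono p q hpq k
  rw [hqk, hpk] at this
  exact absurd this zero_lt_one.not_ge

variable [DecidableEq ι]

theorem exists_pos_update_mem_rejectionSet (hD01 : ∀ p k, D p k = 0 ∨ D p k = 1)
    (hrc : ∀ (p : ι → ℝ) (i k : ι),
      Tendsto (fun ε : ℝ => D (Function.update p i ε) k) (𝓝[>] 0)
        (𝓝 (D (Function.update p i 0) k)))
    {I : Finset ι} {p : ι → ℝ} (hp : p ∈ rejectionSet D I) {i : ι} (hpi : p i = 0) :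
    ∃ ε > 0, Function.update p i ε ∈ rejectionSet D I := by
  obtain ⟨k, hk, hpk⟩ := hp
  have hlim := hrc p i k
  rw [show Function.update p i 0 = p from hpi ▸ Function.update_eq_self i p, hpk] at hlim
  have hev : ∀ᶠ ε in 𝓝[>] (0 : ℝ), D (Function.update p i ε) k = 1 :=
    (hlim.eventually (lt_mem_nhds one_half_lt_one)).mono fun ε hε =>
      (hD01 _ k).resolve_left fun h0 => by linarith
  obtain ⟨ε, hε, hεk⟩ := (eventually_mem_nhdsWithin.and hev).exists
  exact ⟨ε, hε, k, hk, hεk⟩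

theorem integral_sup'_piecewise_zero_eq (hD01 : ∀ p k, D p k = 0 ∨ D p k = 1)
    (hDmeas : ∀ k, Measurable fun p => D p k) (μ : Measure (ι → ℝ)) {I : Finset ι}
    (hI : I.Nonempty) :
    ∫ p, I.sup' hI (fun k => D (I.piecewise p fun _ => 0) k) ∂μ
      = μ.real ((fun p => I.piecewise p fun _ => 0) ⁻¹' rejectionSet D I) := by
  have hG : Measurable fun p : ι → ℝ => I.piecewise p fun _ => 0 :=
    measurable_pi_lambda _ fun i => by
      by_cases hi : i ∈ I <;> simp only [hi, Finset.piecewise_eq_of_mem,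
        Finset.piecewise_eq_of_notMem, not_false_eq_true, measurable_pi_apply, measurable_const]
  exact integral_finset_sup'_eq_measureReal μ hI (fun k p => hD01 _ k)
    fun k => (hDmeas k).comp hG

variable [Fintype ι]

/-- FWER control applied with true nulls `I` and the false nulls' p-values a point mass at `c`. -/
theorem StronglyControlsFWER.pi_preimage_piecewise_le {α : ℝ} (hF : StronglyControlsFWER D α)
    (hDmeas : ∀ k, Measurable fun p => D p k) (I : Finset ι) {c : ℝ}
    (hc : c ∈ Set.Icc (0 : ℝ) 1) :
    Measure.pi (fun _ : ι => volume.restrict (Set.Icc (0 : ℝ) 1))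
      ((fun p => I.piecewise p fun _ => c) ⁻¹' rejectionSet D I) ≤ ENNReal.ofReal α := by
  set ν : ι → Measure ℝ := I.piecewise (fun _ => volume.restrict (Set.Icc 0 1))
    fun _ => Measure.dirac c
  have hν : ∀ k, IsProbabilityMeasure (ν k) := fun k =>
    by by_cases hk : k ∈ I <;> simp only [ν, hk, Finset.piecewise_eq_of_mem,
      Finset.piecewise_eq_of_notMem, not_false_eq_true] <;> infer_instance
  rw [(measurePreserving_piecewise_const _ I c).measure_preimage
    (measurableSet_rejectionSet hDmeas I).nullMeasurableSet]
  convert hF (fun k => decide (k ∉ I)) ν hν (fun k => ?_) (fun k hk => ?_) using 2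
  · ext p; simp [rejectionSet]
  · by_cases hk : k ∈ I
    · simp [ν, hk, Measure.restrict_apply measurableSet_Icc.compl]
    · simp [ν, hk, hc]
  · simp_all [ν]

theorem integral_le_of_stronglyControlsFWER {α : ℝ} (hα : 0 ≤ α)
    (hD01 : ∀ p k, D p k = 0 ∨ D p k = 1) (hDmeas : ∀ k, Measurable fun p => D p k)
    (hmono : ∀ p q : ι → ℝ, (∀ i, p i ≤ q i) → ∀ k, D q k ≤ D p k)
    (hrc : ∀ (p : ι → ℝ) (i k : ι),
      Tendsto (fun ε : ℝ => D (Function.update p i ε) k) (𝓝[>] 0)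
        (𝓝 (D (Function.update p i 0) k)))
    (hF : StronglyControlsFWER D α) (I : Finset ι) (hI : I.Nonempty) :
    ∫ p, I.sup' hI (fun k => D (I.piecewise p fun _ => 0) k)
      ∂Measure.pi (fun _ : ι => volume.restrict (Set.Icc (0 : ℝ) 1)) ≤ α := by
  rw [integral_sup'_piecewise_zero_eq hD01 hDmeas]
  refine ENNReal.toReal_le_of_le_ofReal hα <|
    (isLowerSet_rejectionSet hD01 hmono I).measure_preimage_piecewise_zero_le
      (fun p hp i hpi => exists_pos_update_mem_rejectionSet hD01 hrc hp hpi) I _ fun n => ?_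
  exact hF.pi_preimage_piecewise_le hDmeas I
    ⟨by positivity, div_le_one_of_le₀ (by simp) (by positivity)⟩

theorem stronglyControlsFWER_of_integral_le {α : ℝ}
    (hD01 : ∀ p k, D p k = 0 ∨ D p k = 1) (hDmeas : ∀ k, Measurable fun p => D p k)
    (hmono : ∀ p q : ι → ℝ, (∀ i, p i ≤ q i) → ∀ k, D q k ≤ D p k)
    (hint : ∀ (I : Finset ι) (hI : I.Nonempty),
      ∫ p, I.sup' hI (fun k => D (I.piecewise p fun _ => 0) k)
        ∂Measure.pi (fun _ : ι => volume.restrict (Set.Icc (0 : ℝ) 1)) ≤ α) :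
    StronglyControlsFWER D α := by
  intro h ν hν hsupp hnull
  set I := Finset.univ.filter fun k => h k = false
  have hevent : {p | ∃ k, h k = false ∧ D p k = 1} = rejectionSet D I := by
    ext; simp [rejectionSet, I]
  rw [hevent]
  rcases I.eq_empty_or_nonempty with hI | hI
  · simp [hI, rejectionSet]
  have hnonneg : ∀ᵐ p ∂Measure.pi ν, 0 ≤ p := ae_all_iff.mpr fun i =>
    Measure.tendsto_eval_ae_ae.eventually <|
      (show ∀ᵐ x ∂ν i, x ∈ Set.Icc (0 : ℝ) 1 from mem_ae_iff.mpr (hsupp i)).mono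
        fun x hx => hx.1
  have hs := measurableSet_rejectionSet hDmeas I
  calc Measure.pi ν (rejectionSet D I)
      ≤ Measure.pi ν ((fun p => I.piecewise p fun _ => 0) ⁻¹' rejectionSet D I) :=
        measure_mono_ae <| hnonneg.mono fun p hp hpR => isLowerSet_rejectionSet hD01 hmono I
          (I.piecewise_le_of_le_of_le le_rfl hp) hpR
    _ = Measure.pi (fun _ => volume.restrict (Set.Icc (0 : ℝ) 1))
          ((fun p => I.piecewise p fun _ => 0) ⁻¹' rejectionSet D I) :=
        pi_preimage_piecewise_const_congr (fun i hi => hnull i (by simpa [I] using hi)) 0 hs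
    _ ≤ ENNReal.ofReal α := by
        have hle := hint I hI
        rw [integral_sup'_piecewise_zero_eq hD01 hDmeas] at hle
        rw [← ENNReal.ofReal_toReal (measure_ne_top _ _)]
        exact ENNReal.ofReal_le_ofReal hle

end Policy

theorem stmt11_general (K : ℕ) (α : ℝ) (hα0 : 0 ≤ α)
    (D : (Fin K → ℝ) → Fin K → ℝ)
    (hD01 : ∀ p k, D p k = 0 ∨ D p k = 1)
    (hDmeas : ∀ k, Measurable fun p => D p k)
    (hmono : ∀ p q : Fin K → ℝ, (∀ i, p i ≤ q i) → ∀ k, D q k ≤ D p k)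
    (hrc : ∀ (p : Fin K → ℝ) (i k : Fin K),
      Filter.Tendsto (fun ε : ℝ => D (Function.update p i ε) k)
        (nhdsWithin 0 (Set.Ioi 0)) (nhds (D (Function.update p i 0) k))) :
    ((∀ (h : Fin K → Bool) (ν : Fin K → Measure ℝ),
        (∀ k, IsProbabilityMeasure (ν k)) →
        (∀ k, ν k (Set.Icc (0:ℝ) 1)ᶜ = 0) →
        (∀ k, h k = false → ν k = volume.restrict (Set.Icc 0 1)) →
        Measure.pi ν {p | ∃ k, h k = false ∧ D p k = 1} ≤ ENNReal.ofReal α)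
      ↔ (∀ (I : Finset (Fin K)) (hI : I.Nonempty),
          ∫ p, (I.sup' hI fun k => D (fun i => if i ∈ I then p i else 0) k)
            ∂(Measure.pi fun _ : Fin K => volume.restrict (Set.Icc (0:ℝ) 1)) ≤ α)) :=
  ⟨integral_le_of_stronglyControlsFWER hα0 hD01 hDmeas hmono hrc,
    stronglyControlsFWER_of_integral_le hD01 hDmeas hmono⟩

/-- integral characterization of strong FWER control. A monotone
(coordinatewise non-increasing), coordinatewise right-continuous-at-zero policy `D`
with values in {0,1} strongly controls the FWER at level α — i.e., for every truth
vector `h` and every configuration of independent p-value distributions on [0,1] that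
are Uniform(0,1) on the true nulls, the probability of a false rejection is ≤ α —
if and only if for every nonempty `I ⊆ [K]`,
`∫_{[0,1]^K} max_{k ∈ I} D_k(p_I^0) dp ≤ α`, where `p_I^0` zeroes the coordinates
outside `I`. -/
theorem stmt11 (K : ℕ) (α : ℝ) (hα0 : 0 ≤ α) (hα1 : α ≤ 1)
    (D : (Fin K → ℝ) → Fin K → ℝ)
    (hD01 : ∀ p k, D p k = 0 ∨ D p k = 1)
    (hDmeas : ∀ k, Measurable fun p => D p k)
    (hmono : ∀ p q : Fin K → ℝ, (∀ i, p i ≤ q i) → ∀ k, D q k ≤ D p k)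
    (hrc : ∀ (p : Fin K → ℝ) (i k : Fin K),
      Filter.Tendsto (fun ε : ℝ => D (Function.update p i ε) k)
        (nhdsWithin 0 (Set.Ioi 0)) (nhds (D (Function.update p i 0) k))) :
    ((∀ (h : Fin K → Bool) (ν : Fin K → Measure ℝ),
        (∀ k, IsProbabilityMeasure (ν k)) →
        (∀ k, ν k (Set.Icc (0:ℝ) 1)ᶜ = 0) →
        (∀ k, h k = false → ν k = volume.restrict (Set.Icc 0 1)) →
        Measure.pi ν {p | ∃ k, h k = false ∧ D p k = 1} ≤ ENNReal.ofReal α)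
      ↔ (∀ (I : Finset (Fin K)) (hI : I.Nonempty),
          ∫ p, (I.sup' hI fun k => D (fun i => if i ∈ I then p i else 0) k)
            ∂(Measure.pi fun _ : Fin K => volume.restrict (Set.Icc (0:ℝ) 1)) ≤ α)) :=
  stmt11_general K α hα0 D hD01 hDmeas hmono hrc
end

section
/- For K = 2 hypotheses, under the extreme-alternative assumption and with strictly decreasing continuous power coefficients a_1, a_2, the policy D̃_k(p_1, p_2) = 1{p_k ≤ α} · φ̃(p_1, p_2), where φ̃(p_1,p_2) = 1{ a_1(p_1,p_2) 1{p_1 ≤ α} + a_2(p_1,p_2) 1{p_2 ≤ α} > t_2 } and t_2 is the smallest threshold with ∫_{[0,1]^2} φ̃ ≤ α, maximizes the power Π(D) = ∫ [a_1 D_1 + a_2 D_2] over all monotone policies D with strong FWER control at level α. -/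
/-!
For a monotone policy on the unit square, the marginal constraints force `D₁ = 0` where
`p₁ > α` and `D₂ = 0` where `p₂ > α`: an antitone `{0,1}`-valued function of `p₁` that equals `1`
at `u` has integral at least `u`. Hence the power of `D` is at most `∫ s · max(D₁, D₂)` for the
score `s = a₁ 1{p₁ ≤ α} + a₂ 1{p₂ ≤ α}`, while `∫ max(D₁, D₂) ≤ α`. The Neyman–Pearson argument
bounds this by `∫ s · 1{s > t₂}`, provided `t₂ ≥ 0` and `μ{s > t₂} ≥ α`.
The threshold is positive because `s` is bounded below by a positive constant on
`{p₁ ≤ α ∨ p₂ ≤ α}`, whose mass `1 - (1 - α)²` exceeds `α`. Continuity of measure gives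
`μ{s ≥ t₂} ≥ α`, and the level set `{s = t₂}` is null: on each horizontal line `s` is strictly
decreasing in `p₂` on either side of `α`, or vanishes there, so it meets the level `t₂ ≠ 0` at
most twice.
-/

open MeasureTheory Set Filter Topology

section ThresholdTests

variable {X : Type*} [MeasurableSpace X] {μ : Measure X} {f : X → ℝ}

theorem integral_ite_lt_eq_measureReal (hf : Measurable f) (c : ℝ) :
    ∫ x, (if c < f x then (1 : ℝ) else 0) ∂μ = μ.real {x | c < f x} := by
  rw [← integral_indicator_one (measurableSet_lt measurable_const hf)]
  simp only [Set.indicator_apply, mem_ofPred_eq, Pi.one_apply]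

theorem MeasureTheory.Integrable.mul_of_mem_Icc {g h : X → ℝ} (hg : Integrable g μ)
    (hh : AEStronglyMeasurable h μ) (hh01 : ∀ x, h x ∈ Icc (0 : ℝ) 1) :
    Integrable (fun x => g x * h x) μ :=
  hg.mul_bdd hh (c := 1) (ae_of_all _ fun x => by
    rw [Real.norm_eq_abs, abs_le]; exact ⟨by linarith [(hh01 x).1], (hh01 x).2⟩)

variable [IsFiniteMeasure μ]

theorem integral_mul_le_integral_mul_ite_lt {ψ : X → ℝ} {t : ℝ} (ht : 0 ≤ t)
    (hf : Measurable f) (hfi : Integrable f μ) (hψ : AEStronglyMeasurable ψ μ)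
    (hψ01 : ∀ x, ψ x ∈ Icc (0 : ℝ) 1) (hψt : ∫ x, ψ x ∂μ ≤ μ.real {x | t < f x}) :
    ∫ x, f x * ψ x ∂μ ≤ ∫ x, f x * (if t < f x then 1 else 0) ∂μ := by
  set φ : X → ℝ := fun x => if t < f x then 1 else 0
  have hφ : Measurable φ :=
    Measurable.ite (measurableSet_lt measurable_const hf) measurable_const measurable_const
  have hφ01 : ∀ x, φ x ∈ Icc (0 : ℝ) 1 := fun x => by simp only [φ]; split_ifs <;> simp
  have hψi : Integrable ψ μ := by
    simpa using (integrable_const (1 : ℝ)).mul_of_mem_Icc hψ hψ01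
  have hφi : Integrable φ μ := by
    simpa using (integrable_const (1 : ℝ)).mul_of_mem_Icc hφ.aestronglyMeasurable hφ01
  have hfψ := hfi.mul_of_mem_Icc hψ hψ01
  have hfφ := hfi.mul_of_mem_Icc hφ.aestronglyMeasurable hφ01
  -- `φ` is `1` exactly where `f - t > 0`, so `(f - t) (ψ - φ) ≤ 0` pointwise.
  have hpt : ∀ x, f x * ψ x - f x * φ x ≤ t * ψ x - t * φ x := fun x => by
    have := hψ01 x
    simp only [φ]
    split_ifs with h <;> nlinarith [this.1, this.2]
  have hφi' : ∫ x, φ x ∂μ = μ.real {x | t < f x} := integral_ite_lt_eq_measureReal hf t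
  have hdiff : ∫ x, f x * ψ x ∂μ - ∫ x, f x * φ x ∂μ ≤ 0 :=
    calc ∫ x, f x * ψ x ∂μ - ∫ x, f x * φ x ∂μ = ∫ x, (f x * ψ x - f x * φ x) ∂μ :=
          (integral_sub hfψ hfφ).symm
      _ ≤ ∫ x, (t * ψ x - t * φ x) ∂μ :=
          integral_mono (hfψ.sub hfφ) ((hψi.const_mul t).sub (hφi.const_mul t)) hpt
      _ = t * (∫ x, ψ x ∂μ - ∫ x, φ x ∂μ) := by
          rw [integral_sub (hψi.const_mul t) (hφi.const_mul t), integral_const_mul,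
            integral_const_mul, mul_sub]
      _ ≤ 0 := mul_nonpos_of_nonneg_of_nonpos ht (by linarith)
  linarith

theorem mem_lowerBounds_setOf_measureReal_lt_le {α m : ℝ} (hm : α < μ.real {x | m ≤ f x}) :
    m ∈ lowerBounds {c | μ.real {x | c < f x} ≤ α} := fun c hc => by
  by_contra! hcm
  have : μ.real {x | m ≤ f x} ≤ μ.real {x | c < f x} :=
    measureReal_mono fun x hx => hcm.trans_le hx
  exact (hm.trans_le this).not_ge hc

theorem le_measureReal_setOf_sInf_lt (hf : Measurable f) {α : ℝ}
    (hbdd : BddBelow {c | μ.real {x | c < f x} ≤ α})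
    (hnull : μ {x | f x = sInf {c | μ.real {x | c < f x} ≤ α}} = 0) :
    α ≤ μ.real {x | sInf {c | μ.real {x | c < f x} ≤ α} < f x} := by
  set t := sInf {c | μ.real {x | c < f x} ≤ α}
  obtain ⟨u, hu_mono, hu_lt, hu_lim⟩ := exists_seq_strictMono_tendsto t
  have hinter : ⋂ n, {x | u n < f x} = {x | t ≤ f x} := by
    ext x
    simp only [mem_iInter, mem_ofPred_eq]
    exact ⟨fun h => le_of_tendsto' hu_lim fun n => (h n).le, fun h n => (hu_lt n).trans_le h⟩
  have hlim := tendsto_measure_iInter_atTop (μ := μ)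
    (fun n => (measurableSet_lt measurable_const hf).nullMeasurableSet)
    (fun m n hmn x hx => (hu_mono.monotone hmn).trans_lt hx) ⟨0, measure_ne_top _ _⟩
  rw [hinter] at hlim
  have hle : α ≤ μ.real {x | t ≤ f x} :=
    ge_of_tendsto' ((ENNReal.tendsto_toReal (measure_ne_top _ _)).comp hlim) fun n =>
      le_of_lt <| not_le.1 fun h => (csInf_le hbdd h).not_gt (hu_lt n)
  calc α ≤ μ.real {x | t ≤ f x} := hle
    _ ≤ μ.real ({x | t < f x} ∪ {x | f x = t}) :=
        measureReal_mono fun x (hx : t ≤ f x) => hx.lt_or_eq.imp id Eq.symm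
    _ ≤ μ.real {x | t < f x} + μ.real {x | f x = t} := measureReal_union_le _ _
    _ = μ.real {x | t < f x} := by rw [(measureReal_eq_zero_iff).2 hnull, add_zero]

end ThresholdTests

theorem mul_le_setIntegral_Icc_of_antitone {g : ℝ → ℝ} (hg : Antitone g) (hg0 : 0 ≤ g)
    {a b u : ℝ} (hu : u ∈ Icc a b) : (u - a) * g u ≤ ∫ v in Icc a b, g v := by
  have hint : ∀ c, IntegrableOn g (Icc a c) := fun c =>
    (hg.antitoneOn _).integrableOn_isCompact isCompact_Icc
  calc (u - a) * g u = ∫ _ in Icc a u, g u := by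
        rw [setIntegral_const, Real.volume_real_Icc_of_le hu.1, smul_eq_mul]
    _ ≤ ∫ v in Icc a u, g v :=
        setIntegral_mono_on (integrableOn_const measure_Icc_lt_top.ne) (hint u) measurableSet_Icc
          fun v hv => hg hv.2
    _ ≤ ∫ v in Icc a b, g v :=
        setIntegral_mono_set (hint b) (ae_of_all _ fun v => hg0 v)
          (Icc_subset_Icc le_rfl hu.2).eventuallyLE

abbrev unitSquare : Set (ℝ × ℝ) := Icc 0 1 ×ˢ Icc 0 1

noncomputable abbrev unitSquareMeasure : Measure (ℝ × ℝ) :=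
  (volume.restrict (Icc (0 : ℝ) 1)).prod (volume.restrict (Icc (0 : ℝ) 1))

instance : IsProbabilityMeasure (volume.restrict (Icc (0 : ℝ) 1)) :=
  ⟨by simp⟩

theorem isCompact_unitSquare : IsCompact unitSquare :=
  isCompact_Icc.prod isCompact_Icc

theorem unitSquareMeasure_eq : unitSquareMeasure = volume.restrict unitSquare := by
  rw [unitSquareMeasure, Measure.prod_restrict, ← Measure.volume_eq_prod]

theorem ae_mem_unitSquare : ∀ᵐ x ∂unitSquareMeasure, x ∈ unitSquare := by
  rw [unitSquareMeasure_eq]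
  exact ae_restrict_mem (measurableSet_Icc.prod measurableSet_Icc)

theorem Continuous.integrable_unitSquareMeasure {g : ℝ × ℝ → ℝ} (hg : Continuous g) :
    Integrable g unitSquareMeasure := by
  rw [unitSquareMeasure_eq]
  exact hg.continuousOn.integrableOn_compact isCompact_unitSquare

theorem measureReal_unitSquare_fst_le_or_snd_le {α : ℝ} (hα : α ∈ Icc (0 : ℝ) 1) :
    unitSquareMeasure.real {x | x.1 ≤ α ∨ x.2 ≤ α} = 1 - (1 - α) ^ 2 := by
  have hcompl : {x : ℝ × ℝ | x.1 ≤ α ∨ x.2 ≤ α}ᶜ = Ioi α ×ˢ Ioi α := by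
    ext x; simp [not_or]
  have hIoi : (volume.restrict (Icc (0 : ℝ) 1)).real (Ioi α) = 1 - α := by
    have : Ioi α ∩ Icc 0 1 = Ioc α 1 := by
      ext x
      simp only [mem_inter_iff, mem_Ioi, mem_Icc, mem_Ioc]
      exact ⟨fun h => ⟨h.1, h.2.2⟩, fun h => ⟨h.1, hα.1.trans h.1.le, h.2⟩⟩
    rw [measureReal_restrict_apply measurableSet_Ioi, this, Real.volume_real_Ioc_of_le hα.2]
  have hmeas : MeasurableSet {x : ℝ × ℝ | x.1 ≤ α ∨ x.2 ≤ α} :=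
    (measurableSet_le measurable_fst measurable_const).union
      (measurableSet_le measurable_snd measurable_const)
  have := probReal_compl_eq_one_sub (μ := unitSquareMeasure) hmeas
  rw [hcompl, measureReal_prod_prod, hIoi] at this
  linarith

theorem fst_le_of_one_le_of_antitone {D : ℝ × ℝ → ℝ} {α : ℝ} (hD : Antitone D) (hD0 : 0 ≤ D)
    (hc : ∫ u in Icc (0 : ℝ) 1, D (u, 0) ≤ α) {x : ℝ × ℝ} (hx : x ∈ unitSquare)
    (h1 : 1 ≤ D x) : x.1 ≤ α := by
  have hg : Antitone fun u => D (u, 0) := fun u v huv => hD (Prod.mk_le_mk.2 ⟨huv, le_rfl⟩)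
  have hx1 : 1 ≤ D (x.1, 0) := h1.trans (hD (Prod.mk_le_mk.2 ⟨le_rfl, hx.2.1⟩))
  calc x.1 ≤ x.1 * D (x.1, 0) := le_mul_of_one_le_right hx.1.1 hx1
    _ ≤ ∫ u in Icc (0 : ℝ) 1, D (u, 0) := by
        simpa using mul_le_setIntegral_Icc_of_antitone hg (fun u => hD0 _) hx.1
    _ ≤ α := hc

theorem snd_le_of_one_le_of_antitone {D : ℝ × ℝ → ℝ} {α : ℝ} (hD : Antitone D) (hD0 : 0 ≤ D)
    (hc : ∫ u in Icc (0 : ℝ) 1, D (0, u) ≤ α) {x : ℝ × ℝ} (hx : x ∈ unitSquare)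
    (h1 : 1 ≤ D x) : x.2 ≤ α :=
  fst_le_of_one_le_of_antitone (D := D ∘ Prod.swap) (fun _ _ h => hD (Prod.swap_le_swap.2 h))
    (fun y => hD0 y.swap) hc (x := x.swap) ⟨hx.2, hx.1⟩ h1

noncomputable def rejectionScore (α : ℝ) (a1 a2 : ℝ × ℝ → ℝ) (x : ℝ × ℝ) : ℝ :=
  a1 x * (if x.1 ≤ α then 1 else 0) + a2 x * (if x.2 ≤ α then 1 else 0)

noncomputable def rejectionThreshold (α : ℝ) (a1 a2 : ℝ × ℝ → ℝ) : ℝ :=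
  sInf {c | unitSquareMeasure.real {x | c < rejectionScore α a1 a2 x} ≤ α}

section RejectionScore

variable {α : ℝ} {a1 a2 : ℝ × ℝ → ℝ}

theorem measurable_rejectionScore (ha1 : Measurable a1) (ha2 : Measurable a2) :
    Measurable (rejectionScore α a1 a2) :=
  (ha1.mul (Measurable.ite (measurableSet_le measurable_fst measurable_const)
    measurable_const measurable_const)).add
  (ha2.mul (Measurable.ite (measurableSet_le measurable_snd measurable_const)
    measurable_const measurable_const))

theorem integrable_rejectionScore (ha1 : Continuous a1) (ha2 : Continuous a2) :
    Integrable (rejectionScore α a1 a2) unitSquareMeasure := by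
  have hind : ∀ (p : Prop) [Decidable p], (if p then (1 : ℝ) else 0) ∈ Icc 0 1 :=
    fun p _ => by split_ifs <;> simp
  exact (ha1.integrable_unitSquareMeasure.mul_of_mem_Icc (Measurable.ite
      (measurableSet_le measurable_fst measurable_const) measurable_const
      measurable_const).aestronglyMeasurable fun _ => hind _).add
    (ha2.integrable_unitSquareMeasure.mul_of_mem_Icc (Measurable.ite
      (measurableSet_le measurable_snd measurable_const) measurable_const
      measurable_const).aestronglyMeasurable fun _ => hind _)

theorem mul_add_mul_le_rejectionScore_mul_max {x : ℝ × ℝ} (ha1 : 0 ≤ a1 x) (ha2 : 0 ≤ a2 x)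
    {d1 d2 : ℝ} (hd1 : d1 = 0 ∨ d1 = 1) (hd2 : d2 = 0 ∨ d2 = 1)
    (h1 : d1 = 1 → x.1 ≤ α) (h2 : d2 = 1 → x.2 ≤ α) :
    a1 x * d1 + a2 x * d2 ≤ rejectionScore α a1 a2 x * max d1 d2 := by
  unfold rejectionScore
  rcases hd1 with rfl | rfl <;> rcases hd2 with rfl | rfl <;> norm_num at h1 h2 ⊢ <;>
    split_ifs <;> linarith

theorem exists_pos_mem_lowerBounds_rejectionScore (hα : α ∈ Ioo (0 : ℝ) 1)
    (ha1 : Continuous a1) (ha2 : Continuous a2) (ha1pos : ∀ x, 0 < a1 x)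
    (ha2pos : ∀ x, 0 < a2 x) :
    ∃ m > 0, m ∈ lowerBounds
      {c | unitSquareMeasure.real {x | c < rejectionScore α a1 a2 x} ≤ α} := by
  obtain ⟨x₀, -, hx₀⟩ := isCompact_unitSquare.exists_isMinOn ⟨(0, 0), by simp⟩
    (ha1.min ha2).continuousOn
  refine ⟨min (a1 x₀) (a2 x₀), lt_min (ha1pos x₀) (ha2pos x₀),
    mem_lowerBounds_setOf_measureReal_lt_le ?_⟩
  have hle : {x : ℝ × ℝ | x.1 ≤ α ∨ x.2 ≤ α} ≤ᵐ[unitSquareMeasure]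
      {x | min (a1 x₀) (a2 x₀) ≤ rejectionScore α a1 a2 x} := by
    filter_upwards [ae_mem_unitSquare] with x hx hxα
    have hmin : min (a1 x₀) (a2 x₀) ≤ min (a1 x) (a2 x) := hx₀ hx
    have := ha1pos x
    have := ha2pos x
    change _ ≤ rejectionScore α a1 a2 x
    unfold rejectionScore
    rcases hxα with h | h <;> split_ifs <;>
      linarith [min_le_left (a1 x) (a2 x), min_le_right (a1 x) (a2 x)]
  calc α < 1 - (1 - α) ^ 2 := by nlinarith [hα.1, hα.2]
    _ = unitSquareMeasure.real {x | x.1 ≤ α ∨ x.2 ≤ α} :=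
        (measureReal_unitSquare_fst_le_or_snd_le (Ioo_subset_Icc_self hα)).symm
    _ ≤ _ := ENNReal.toReal_mono (measure_ne_top _ _) (measure_mono_ae hle)

theorem exists_measureReal_setOf_lt_rejectionScore_le (hα : 0 ≤ α) (ha1 : Continuous a1)
    (ha2 : Continuous a2) :
    ∃ c, unitSquareMeasure.real {x | c < rejectionScore α a1 a2 x} ≤ α := by
  obtain ⟨C, hC⟩ :=
    isCompact_unitSquare.exists_bound_of_continuousOn (ha1.abs.add ha2.abs).continuousOn
  refine ⟨C, le_of_eq_of_le ((measureReal_eq_zero_iff).2 ?_) hα⟩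
  refine measure_eq_zero_iff_ae_notMem.2 ?_
  filter_upwards [ae_mem_unitSquare] with x hx
  have hCx : |a1 x| + |a2 x| ≤ C := (le_abs_self _).trans (hC x hx)
  simp only [not_lt, rejectionScore]
  split_ifs <;>
    linarith [abs_nonneg (a1 x), abs_nonneg (a2 x), le_abs_self (a1 x), le_abs_self (a2 x)]

theorem countable_setOf_rejectionScore_eq (ha1 : ∀ u v w : ℝ, v < w → a1 (u, w) < a1 (u, v))
    (ha2 : ∀ u v w : ℝ, v < w → a2 (u, w) < a2 (u, v)) {t : ℝ} (ht : t ≠ 0) (u : ℝ) :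
    {y | rejectionScore α a1 a2 (u, y) = t}.Countable := by
  set g : ℝ → ℝ := fun y => rejectionScore α a1 a2 (u, y)
  have hsub : ∀ s : Set ℝ, InjOn g s → (s ∩ {y | g y = t}).Subsingleton :=
    fun s hs y hy z hz => hs hy.1 hz.1 (hy.2.trans hz.2.symm)
  have hIic : InjOn g (Iic α) := by
    refine StrictAntiOn.injOn fun v (hv : v ≤ α) w (hw : w ≤ α) hvw => ?_
    have := ha1 u v w hvw
    have := ha2 u v w hvw
    simp only [g, rejectionScore, if_pos hv, if_pos hw]
    split_ifs <;> linarith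
  have hIoi : (Ioi α ∩ {y | g y = t}).Subsingleton := by
    by_cases hu : u ≤ α
    · refine hsub _ (StrictAntiOn.injOn fun v (hv : α < v) w (hw : α < w) hvw => ?_)
      simp only [g, rejectionScore, if_pos hu, if_neg hv.not_ge, if_neg hw.not_ge]
      linarith [ha1 u v w hvw]
    · rintro y ⟨hy : α < y, hyt⟩
      simp only [g, rejectionScore, if_neg hu, if_neg (not_le.2 hy), mul_zero, add_zero,
        mem_ofPred_eq] at hyt
      exact absurd hyt.symm ht
  refine ((hsub _ hIic).countable.union hIoi.countable).mono fun y hy => ?_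
  rcases le_or_gt y α with h | h
  exacts [Or.inl ⟨h, hy⟩, Or.inr ⟨h, hy⟩]

theorem measure_setOf_rejectionScore_eq (ha1m : Measurable a1) (ha2m : Measurable a2)
    (ha1 : ∀ u v w : ℝ, v < w → a1 (u, w) < a1 (u, v))
    (ha2 : ∀ u v w : ℝ, v < w → a2 (u, w) < a2 (u, v)) {t : ℝ} (ht : t ≠ 0) :
    unitSquareMeasure {x | rejectionScore α a1 a2 x = t} = 0 :=
  (Measure.measure_prod_null (measurable_rejectionScore ha1m ha2m (measurableSet_singleton t))).2
    (ae_of_all _ fun u => (countable_setOf_rejectionScore_eq ha1 ha2 ht u).measure_zero _)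

theorem rejectionThreshold_pos (hα : α ∈ Ioo (0 : ℝ) 1) (ha1 : Continuous a1)
    (ha2 : Continuous a2) (ha1pos : ∀ x, 0 < a1 x) (ha2pos : ∀ x, 0 < a2 x) :
    0 < rejectionThreshold α a1 a2 := by
  obtain ⟨m, hm, hmS⟩ := exists_pos_mem_lowerBounds_rejectionScore hα ha1 ha2 ha1pos ha2pos
  exact hm.trans_le (le_csInf (exists_measureReal_setOf_lt_rejectionScore_le hα.1.le ha1 ha2) hmS)

theorem le_measureReal_setOf_rejectionThreshold_lt (hα : α ∈ Ioo (0 : ℝ) 1)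
    (ha1c : Continuous a1) (ha2c : Continuous a2) (ha1pos : ∀ x, 0 < a1 x)
    (ha2pos : ∀ x, 0 < a2 x) (ha1 : ∀ u v w : ℝ, v < w → a1 (u, w) < a1 (u, v))
    (ha2 : ∀ u v w : ℝ, v < w → a2 (u, w) < a2 (u, v)) :
    α ≤ unitSquareMeasure.real {x | rejectionThreshold α a1 a2 < rejectionScore α a1 a2 x} := by
  obtain ⟨m, -, hmS⟩ := exists_pos_mem_lowerBounds_rejectionScore hα ha1c ha2c ha1pos ha2pos
  exact le_measureReal_setOf_sInf_lt (measurable_rejectionScore ha1c.measurable ha2c.measurable)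
    ⟨m, hmS⟩ (measure_setOf_rejectionScore_eq ha1c.measurable ha2c.measurable ha1 ha2
      (rejectionThreshold_pos hα ha1c ha2c ha1pos ha2pos).ne')

end RejectionScore

theorem integral_mul_add_mul_le_integral_rejectionScore_mul_max {α : ℝ} {a1 a2 : ℝ × ℝ → ℝ}
    (ha1 : Continuous a1) (ha2 : Continuous a2) (ha1nn : ∀ x, 0 ≤ a1 x) (ha2nn : ∀ x, 0 ≤ a2 x)
    {D1 D2 : ℝ × ℝ → ℝ} (hD1 : ∀ x, D1 x = 0 ∨ D1 x = 1) (hD2 : ∀ x, D2 x = 0 ∨ D2 x = 1)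
    (hD1m : Measurable D1) (hD2m : Measurable D2) (hD1a : Antitone D1) (hD2a : Antitone D2)
    (hc1 : ∫ u in Icc (0 : ℝ) 1, D1 (u, 0) ≤ α) (hc2 : ∫ u in Icc (0 : ℝ) 1, D2 (0, u) ≤ α) :
    ∫ x, (a1 x * D1 x + a2 x * D2 x) ∂unitSquareMeasure
      ≤ ∫ x, rejectionScore α a1 a2 x * max (D1 x) (D2 x) ∂unitSquareMeasure := by
  have hD1' : ∀ x, D1 x ∈ Icc (0 : ℝ) 1 := fun x => by rcases hD1 x with h | h <;> simp [h]
  have hD2' : ∀ x, D2 x ∈ Icc (0 : ℝ) 1 := fun x => by rcases hD2 x with h | h <;> simp [h]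
  refine integral_mono_ae
    ((ha1.integrable_unitSquareMeasure.mul_of_mem_Icc hD1m.aestronglyMeasurable hD1').add
      (ha2.integrable_unitSquareMeasure.mul_of_mem_Icc hD2m.aestronglyMeasurable hD2'))
    ((integrable_rejectionScore ha1 ha2).mul_of_mem_Icc (hD1m.max hD2m).aestronglyMeasurable
      fun x => ⟨(hD1' x).1.trans (le_max_left _ _), max_le (hD1' x).2 (hD2' x).2⟩) ?_
  filter_upwards [ae_mem_unitSquare] with x hx
  exact mul_add_mul_le_rejectionScore_mul_max (ha1nn x) (ha2nn x) (hD1 x) (hD2 x)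
    (fun h => fst_le_of_one_le_of_antitone hD1a (fun y => (hD1' y).1) hc1 hx h.ge)
    (fun h => snd_le_of_one_le_of_antitone hD2a (fun y => (hD2' y).1) hc2 hx h.ge)

theorem stmt13_general (α : ℝ) (hα0 : 0 < α) (hα1 : α < 1)
    (μ : Measure (ℝ × ℝ))
    (hμ : μ = (volume.restrict (Set.Icc (0:ℝ) 1)).prod (volume.restrict (Set.Icc (0:ℝ) 1)))
    (a1 a2 : ℝ × ℝ → ℝ)
    (ha1c : Continuous a1) (ha2c : Continuous a2)
    (ha1pos : ∀ x, 0 < a1 x) (ha2pos : ∀ x, 0 < a2 x)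
    (ha1dec2 : ∀ u v w : ℝ, v < w → a1 (u, w) < a1 (u, v))
    (ha2dec2 : ∀ u v w : ℝ, v < w → a2 (u, w) < a2 (u, v))
    (t2 : ℝ)
    (ht2 : t2 = sInf {c : ℝ |
      ∫ x, (if a1 x * (if x.1 ≤ α then (1:ℝ) else 0)
              + a2 x * (if x.2 ≤ α then (1:ℝ) else 0) > c then (1:ℝ) else 0) ∂μ ≤ α})
    (φt : ℝ × ℝ → ℝ)
    (hφt : ∀ x, φt x = if a1 x * (if x.1 ≤ α then (1:ℝ) else 0)
              + a2 x * (if x.2 ≤ α then (1:ℝ) else 0) > t2 then (1:ℝ) else 0)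
    (D1 D2 : ℝ × ℝ → ℝ)
    (hD01 : ∀ x, (D1 x = 0 ∨ D1 x = 1) ∧ (D2 x = 0 ∨ D2 x = 1))
    (hD1meas : Measurable D1) (hD2meas : Measurable D2)
    (hDmono : ∀ x y : ℝ × ℝ, x.1 ≤ y.1 → x.2 ≤ y.2 → D1 y ≤ D1 x ∧ D2 y ≤ D2 x)
    (hc1 : ∫ u in Set.Icc (0:ℝ) 1, D1 (u, 0) ≤ α)
    (hc2 : ∫ u in Set.Icc (0:ℝ) 1, D2 (0, u) ≤ α)
    (hc3 : ∫ x, max (D1 x) (D2 x) ∂μ ≤ α) :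
    ∫ x, (a1 x * D1 x + a2 x * D2 x) ∂μ ≤
      ∫ x, (a1 x * ((if x.1 ≤ α then (1:ℝ) else 0) * φt x)
          + a2 x * ((if x.2 ≤ α then (1:ℝ) else 0) * φt x)) ∂μ := by
  subst hμ
  have hf : Measurable (rejectionScore α a1 a2) :=
    measurable_rejectionScore ha1c.measurable ha2c.measurable
  obtain rfl : t2 = rejectionThreshold α a1 a2 := by
    rw [ht2, rejectionThreshold]
    congr 1
    ext c
    exact iff_of_eq (congrArg (· ≤ α) (integral_ite_lt_eq_measureReal hf c))
  have hψ : ∀ x, max (D1 x) (D2 x) ∈ Icc (0 : ℝ) 1 := fun x => by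
    rcases hD01 x with ⟨h1 | h1, h2 | h2⟩ <;> simp [h1, h2]
  calc ∫ x, (a1 x * D1 x + a2 x * D2 x) ∂unitSquareMeasure
      ≤ ∫ x, rejectionScore α a1 a2 x * max (D1 x) (D2 x) ∂unitSquareMeasure :=
        integral_mul_add_mul_le_integral_rejectionScore_mul_max ha1c ha2c (fun x => (ha1pos x).le)
          (fun x => (ha2pos x).le) (fun x => (hD01 x).1) (fun x => (hD01 x).2) hD1meas hD2meas
          (fun x y h => (hDmono x y h.1 h.2).1) (fun x y h => (hDmono x y h.1 h.2).2) hc1 hc2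
    _ ≤ ∫ x, rejectionScore α a1 a2 x *
          (if rejectionThreshold α a1 a2 < rejectionScore α a1 a2 x then 1 else 0)
          ∂unitSquareMeasure :=
        integral_mul_le_integral_mul_ite_lt (rejectionThreshold_pos ⟨hα0, hα1⟩ ha1c ha2c ha1pos
          ha2pos).le hf (integrable_rejectionScore ha1c ha2c)
          (hD1meas.max hD2meas).aestronglyMeasurable hψ
          (hc3.trans (le_measureReal_setOf_rejectionThreshold_lt ⟨hα0, hα1⟩ ha1c ha2c ha1pos
            ha2pos ha1dec2 ha2dec2))
    _ = _ := integral_congr_ae (ae_of_all _ fun x => by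
      simp only [hφt, rejectionScore, gt_iff_lt]; split_ifs <;> ring)

/-- Optimality for K = 2. With continuous, strictly decreasing, positive
power coefficients `a1, a2`, the policy `D̃_k(p) = 1{p_k ≤ α} · φ̃(p)`, where
`φ̃(p) = 1{a1(p) 1{p₁ ≤ α} + a2(p) 1{p₂ ≤ α} > t₂}` and `t₂` is the smallest threshold
giving level α, maximizes the power `∫ (a1 D1 + a2 D2)` over all monotone policies
with strong FWER control at level α (expressed by the integral constraints). -/
theorem stmt13 (α : ℝ) (hα0 : 0 < α) (hα1 : α < 1)
    (μ : Measure (ℝ × ℝ))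
    (hμ : μ = (volume.restrict (Set.Icc (0:ℝ) 1)).prod (volume.restrict (Set.Icc (0:ℝ) 1)))
    (a1 a2 : ℝ × ℝ → ℝ)
    (ha1c : Continuous a1) (ha2c : Continuous a2)
    (ha1pos : ∀ x, 0 < a1 x) (ha2pos : ∀ x, 0 < a2 x)
    (ha1dec1 : ∀ u v w : ℝ, u < v → a1 (v, w) < a1 (u, w))
    (ha1dec2 : ∀ u v w : ℝ, v < w → a1 (u, w) < a1 (u, v))
    (ha2dec1 : ∀ u v w : ℝ, u < v → a2 (v, w) < a2 (u, w))
    (ha2dec2 : ∀ u v w : ℝ, v < w → a2 (u, w) < a2 (u, v))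
    (t2 : ℝ)
    (ht2 : t2 = sInf {c : ℝ |
      ∫ x, (if a1 x * (if x.1 ≤ α then (1:ℝ) else 0)
              + a2 x * (if x.2 ≤ α then (1:ℝ) else 0) > c then (1:ℝ) else 0) ∂μ ≤ α})
    (φt : ℝ × ℝ → ℝ)
    (hφt : ∀ x, φt x = if a1 x * (if x.1 ≤ α then (1:ℝ) else 0)
              + a2 x * (if x.2 ≤ α then (1:ℝ) else 0) > t2 then (1:ℝ) else 0)
    (D1 D2 : ℝ × ℝ → ℝ)
    (hD01 : ∀ x, (D1 x = 0 ∨ D1 x = 1) ∧ (D2 x = 0 ∨ D2 x = 1))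
    (hD1meas : Measurable D1) (hD2meas : Measurable D2)
    (hDmono : ∀ x y : ℝ × ℝ, x.1 ≤ y.1 → x.2 ≤ y.2 → D1 y ≤ D1 x ∧ D2 y ≤ D2 x)
    (hc1 : ∫ u in Set.Icc (0:ℝ) 1, D1 (u, 0) ≤ α)
    (hc2 : ∫ u in Set.Icc (0:ℝ) 1, D2 (0, u) ≤ α)
    (hc3 : ∫ x, max (D1 x) (D2 x) ∂μ ≤ α) :
    ∫ x, (a1 x * D1 x + a2 x * D2 x) ∂μ ≤
      ∫ x, (a1 x * ((if x.1 ≤ α then (1:ℝ) else 0) * φt x)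
          + a2 x * ((if x.2 ≤ α then (1:ℝ) else 0) * φt x)) ∂μ :=
  stmt13_general α hα0 hα1 μ hμ a1 a2 ha1c ha2c ha1pos ha2pos ha1dec2 ha2dec2 t2 ht2 φt hφt D1 D2
    hD01 hD1meas hD2meas hDmono hc1 hc2 hc3
end
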